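/- For any join semilattice J, there is an embedding of J into a complete Boolean algebra that preserves all existing finite joins and all existing exact meets. -/

import Mathlib

/-!
Read upside down, `J` is a meet-semilattice in which the exact meets are joins stable under
meets, i.e. a coverage. As for sites, the up-sets of `J` closed under exact meets form a frame `F`,
and `a ↦ ↑a` sends joins of `J` to meets of `F` and exact meets to joins. In the frame of nuclei
of `F`, the closed nucleus `u ⊔ ·` has the open nucleus `u ⇨ ·` as complement, and `u ↦ u ⊔ ·`
is an order embedding preserving finite meets and all joins. Complemented elements are regular,
so the Booleanization (the `¬¬`-fixed points) of the frame of nuclei still contains them with the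
same meets and joins; reversing its order gives the embedding.
-/

section ExactMeet

variable {J : Type*} [SemilatticeSup J]

def IsExactMeet (S : Set J) (m : J) : Prop :=
  IsGLB S m ∧ ∀ a, IsGLB ((a ⊔ ·) '' S) (a ⊔ m)

lemma IsExactMeet.image_sup_left {S : Set J} {m : J} (h : IsExactMeet S m) (a : J) :
    IsExactMeet ((a ⊔ ·) '' S) (a ⊔ m) := by
  refine ⟨h.2 a, fun b => ?_⟩
  rw [Set.image_image, ← sup_assoc]
  simpa only [sup_assoc] using h.2 (b ⊔ a)

end ExactMeet

structure ExactClosed (J : Type*) [SemilatticeSup J] where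
  carrier : Set J
  isUpperSet' : IsUpperSet carrier
  mem_of_isExactMeet' : ∀ {S m}, IsExactMeet S m → S ⊆ carrier → m ∈ carrier

namespace ExactClosed

variable {J : Type*} [SemilatticeSup J]

instance : SetLike (ExactClosed J) J where
  coe := carrier
  coe_injective U V h := by cases U; cases V; congr

@[ext] lemma ext {U V : ExactClosed J} (h : ∀ x, x ∈ U ↔ x ∈ V) : U = V := SetLike.ext h

lemma isUpperSet (U : ExactClosed J) : IsUpperSet (U : Set J) := U.isUpperSet'

lemma mem_of_isExactMeet (U : ExactClosed J) {S : Set J} {m : J} (h : IsExactMeet S m)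
    (hS : S ⊆ U) : m ∈ U :=
  U.mem_of_isExactMeet' h hS

instance : PartialOrder (ExactClosed J) := .ofSetLike (ExactClosed J) J

instance : InfSet (ExactClosed J) where
  sInf s :=
    { carrier := ⋂ U ∈ s, U
      isUpperSet' := isUpperSet_iInter₂ fun U _ => U.isUpperSet
      mem_of_isExactMeet' := fun h hS => Set.mem_iInter₂.2 fun U hU =>
        U.mem_of_isExactMeet h (hS.trans (Set.biInter_subset_of_mem hU)) }

lemma mem_sInf {s : Set (ExactClosed J)} {x : J} : x ∈ sInf s ↔ ∀ U ∈ s, x ∈ U :=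
  Set.mem_iInter₂

instance : CompleteLattice (ExactClosed J) :=
  completeLatticeOfInf _ fun _ =>
    ⟨fun _ hU _ hx => mem_sInf.1 hx _ hU, fun _ hV _ hx => mem_sInf.2 fun _ hU => hV hU hx⟩

lemma mem_inf {U V : ExactClosed J} {x : J} : x ∈ U ⊓ V ↔ x ∈ U ∧ x ∈ V := by
  change x ∈ sInf {U, V} ↔ _
  simp only [mem_sInf, Set.mem_insert_iff, Set.mem_singleton_iff, forall_eq_or_imp, forall_eq]

/-- Closedness under exact meets is where exactness, not just existence, of the meets is used. -/
def himp (U V : ExactClosed J) : ExactClosed J where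
  carrier := {x | ∀ y ∈ U, x ⊔ y ∈ V}
  isUpperSet' _ _ hxy hx y hy := V.isUpperSet (sup_le_sup_right hxy y) (hx y hy)
  mem_of_isExactMeet' {S m} h hS y hy := by
    have hmy : y ⊔ m ∈ V := V.mem_of_isExactMeet (h.image_sup_left y) <| by
      rintro _ ⟨s, hs, rfl⟩
      exact (sup_comm s y).subst (motive := (· ∈ V)) (hS hs y hy)
    rwa [sup_comm] at hmy

lemma inf_sSup_le_iSup_inf (U : ExactClosed J) (s : Set (ExactClosed J)) :
    U ⊓ sSup s ≤ ⨆ V ∈ s, U ⊓ V := by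
  intro x hx
  have hs : sSup s ≤ himp U (⨆ V ∈ s, U ⊓ V) := sSup_le fun V hV x hxV y hyU =>
    (le_iSup₂ (f := fun V _ => U ⊓ V) V hV : _)
      (mem_inf.2 ⟨U.isUpperSet le_sup_right hyU, V.isUpperSet le_sup_left hxV⟩)
  simpa using hs (mem_inf.1 hx).2 x (mem_inf.1 hx).1

instance : Order.Frame (ExactClosed J) := .ofMinimalAxioms ⟨inf_sSup_le_iSup_inf⟩

def Ici (a : J) : ExactClosed J where
  carrier := Set.Ici a
  isUpperSet' := isUpperSet_Ici a
  mem_of_isExactMeet' h hS := h.1.2 hS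

@[simp] lemma mem_Ici {a x : J} : x ∈ Ici a ↔ a ≤ x := Iff.rfl

lemma Ici_le_Ici_iff {a b : J} : Ici a ≤ Ici b ↔ b ≤ a :=
  ⟨fun h => h (mem_Ici.2 le_rfl), fun h _ hx => h.trans hx⟩

lemma Ici_sup (a b : J) : Ici (a ⊔ b) = Ici a ⊓ Ici b := by
  ext x
  simp [mem_inf]

lemma Ici_eq_top {m : J} (hm : IsBot m) : Ici m = ⊤ :=
  eq_top_iff.2 fun x _ => hm x

lemma Ici_of_isExactMeet {S : Set J} {m : J} (h : IsExactMeet S m) :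
    Ici m = sSup (Ici '' S) := by
  rw [sSup_image]
  refine le_antisymm (fun x hx => ?_) (iSup₂_le fun s hs => Ici_le_Ici_iff.2 (h.1.1 hs))
  set W := ⨆ s ∈ S, Ici s
  have hSW : S ⊆ W := fun s hs => (le_iSup₂ (f := fun s _ => Ici s) s hs : _) (mem_Ici.2 le_rfl)
  exact W.isUpperSet hx (W.mem_of_isExactMeet h hSW)

end ExactClosed

section Nuclei

variable {X : Type*} [Order.Frame X]

def closedNucleus (u : X) : Nucleus X where
  toFun x := u ⊔ x
  map_inf' x y := sup_inf_left u x y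
  idempotent' x := by simp
  le_apply' _ := le_sup_right

def openNucleus (u : X) : Nucleus X where
  toFun x := u ⇨ x
  map_inf' x y := himp_inf_distrib u x y
  idempotent' x := by simp
  le_apply' _ := le_himp

@[simp] lemma closedNucleus_apply (u x : X) : closedNucleus u x = u ⊔ x := rfl

@[simp] lemma openNucleus_apply (u x : X) : openNucleus u x = u ⇨ x := rfl

lemma isCompl_closedNucleus_openNucleus (u : X) :
    IsCompl (closedNucleus u) (openNucleus u) := by
  constructor
  · rw [disjoint_iff]
    ext x
    simp [inf_sup_right]
  · rw [codisjoint_iff]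
    ext x
    set n := closedNucleus u ⊔ openNucleus u
    have hu : u ≤ n x := le_sup_left.trans ((le_sup_left : closedNucleus u ≤ n) x)
    have hopen : u ⇨ n x ≤ n x :=
      ((le_sup_right : openNucleus u ≤ n) (n x)).trans_eq (n.idempotent x)
    rw [himp_eq_top_iff.2 hu, top_le_iff] at hopen
    exact hopen

lemma closedNucleus_le_closedNucleus_iff {u v : X} :
    closedNucleus u ≤ closedNucleus v ↔ u ≤ v :=
  ⟨fun h => by simpa using h ⊥, fun h x => sup_le_sup_right h x⟩

lemma closedNucleus_inf (u v : X) :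
    closedNucleus (u ⊓ v) = closedNucleus u ⊓ closedNucleus v := by
  ext x
  simp [sup_inf_right]

lemma closedNucleus_sSup (s : Set X) : closedNucleus (sSup s) = sSup (closedNucleus '' s) := by
  rw [sSup_image]
  refine le_antisymm (fun x => ?_)
    (iSup₂_le fun u hu => closedNucleus_le_closedNucleus_iff.2 (le_sSup hu))
  have hle : ∀ u ∈ s, u ≤ (⨆ u ∈ s, closedNucleus u) x := fun u hu =>
    le_sup_left.trans ((le_iSup₂ (f := fun u _ => closedNucleus u) u hu : _) x)
  exact sup_le (sSup_le hle) Nucleus.le_apply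

end Nuclei

namespace Heyting.Regular

variable {α : Type*} [Order.Frame α]

noncomputable instance : CompleteBooleanAlgebra (Regular α) where
  __ := (inferInstance : BooleanAlgebra (Regular α))
  sSup s := toRegular (sSup ((↑) '' s))
  isLUB_sSup _ := gi.isLUB_of_u_image (isLUB_sSup _)
  sInf s := toRegular (sInf ((↑) '' s))
  isGLB_sInf _ := gi.isGLB_of_u_image (isGLB_sInf _)

lemma coe_sSup_of_isRegular {s : Set (Regular α)}
    (h : IsRegular (sSup (((↑) : Regular α → α) '' s))) :
    ((sSup s : Regular α) : α) = sSup ((↑) '' s) :=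
  h

end Heyting.Regular

section RegularClosed

variable {X : Type*} [Order.Frame X]

def regularClosed (u : X) : Heyting.Regular (Nucleus X) :=
  ⟨closedNucleus u,
    (isCompl_closedNucleus_openNucleus u).symm.compl_eq ▸ Heyting.isRegular_compl _⟩

lemma regularClosed_le_regularClosed_iff {u v : X} :
    regularClosed u ≤ regularClosed v ↔ u ≤ v :=
  closedNucleus_le_closedNucleus_iff

lemma regularClosed_inf (u v : X) :
    regularClosed (u ⊓ v) = regularClosed u ⊓ regularClosed v :=
  Heyting.Regular.coe_injective (closedNucleus_inf u v)

lemma regularClosed_top : regularClosed (⊤ : X) = ⊤ :=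
  Heyting.Regular.coe_injective (Nucleus.ext fun _ => top_sup_eq _)

lemma regularClosed_sSup (s : Set X) : regularClosed (sSup s) = sSup (regularClosed '' s) := by
  have hcoe : ((↑) : Heyting.Regular (Nucleus X) → Nucleus X) '' (regularClosed '' s) =
      closedNucleus '' s :=
    Set.image_image _ _ _
  refine Heyting.Regular.coe_injective ?_
  rw [Heyting.Regular.coe_sSup_of_isRegular] <;> rw [hcoe, ← closedNucleus_sSup]
  exacts [rfl, (regularClosed (sSup s)).2]

end RegularClosed

universe u

/-- Funayama for join semilattices: every join semilattice embeds
into a complete Boolean algebra by a map that is order-preserving and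
order-reflecting (hence injective), preserves all existing finite joins
(binary joins, and the bottom element whenever it exists), and preserves all
existing exact meets. -/
theorem funayama_join_semilattice (J : Type u) [SemilatticeSup J] :
    ∃ (B : Type u) (inst : CompleteBooleanAlgebra B) (e : J → B),
      (∀ a b : J, a ≤ b ↔ inst.le (e a) (e b)) ∧
      (∀ a b : J, e (a ⊔ b) = inst.sup (e a) (e b)) ∧
      (∀ m : J, IsBot m → e m = inst.bot) ∧
      (∀ (S : Set J) (m : J), IsGLB S m →
        (∀ a : J, IsGLB ((fun s => a ⊔ s) '' S) (a ⊔ m)) →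
        e m = inst.sInf (e '' S)) := by
  let e (a : J) : (Heyting.Regular (Nucleus (ExactClosed J)))ᵒᵈ :=
    OrderDual.toDual (regularClosed (ExactClosed.Ici a))
  refine ⟨_, inferInstance, e, fun a b => ?_, fun a b => ?_, fun m hm => ?_,
    fun S m hS hexact => ?_⟩
  · exact (regularClosed_le_regularClosed_iff.trans ExactClosed.Ici_le_Ici_iff).symm
  · change OrderDual.toDual (regularClosed (ExactClosed.Ici (a ⊔ b))) = _
    rw [ExactClosed.Ici_sup, regularClosed_inf]
    rfl
  · change OrderDual.toDual (regularClosed (ExactClosed.Ici m)) = _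
    rw [ExactClosed.Ici_eq_top hm, regularClosed_top]
    rfl
  · change OrderDual.toDual (regularClosed (ExactClosed.Ici m)) = _
    rw [ExactClosed.Ici_of_isExactMeet ⟨hS, hexact⟩, regularClosed_sSup, Set.image_image]
    rfl
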